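/- arXiv:2103.15790 — 5 statements merged into one kernel-verified Lean document; each statement's English description precedes it below -/
import Mathlib

section
/- For a risk measure ρ : 𝒳 → ℝ, the following are equivalent: (i) ρ is star-shaped; (ii) the acceptance set 𝒜_ρ = {X ∈ 𝒳 : ρ(X) ≤ 0} is a star-shaped subset of 𝒳; (iii) there exists a star-shaped acceptance set 𝒜 ⊆ 𝒳 such that ρ(X) = inf{m ∈ ℝ : X − m ∈ 𝒜} for all X ∈ 𝒳. -/
open BoundedContinuousFunction

def IsRiskMeasure {Ω : Type*} [TopologicalSpace Ω] (ρ : (Ω →ᵇ ℝ) → ℝ) : Prop :=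
  (∀ X Y : Ω →ᵇ ℝ, Y ≤ X → ρ Y ≤ ρ X) ∧
  (∀ (X : Ω →ᵇ ℝ) (m : ℝ), ρ (X - const Ω m) = ρ X - m) ∧
  ρ 0 = 0

def IsStarShaped {Ω : Type*} [TopologicalSpace Ω] (ρ : (Ω →ᵇ ℝ) → ℝ) : Prop :=
  ∀ (X : Ω →ᵇ ℝ) (l : ℝ), 1 < l → l * ρ X ≤ ρ (l • X)

/-- A star-shaped subset of `𝒳`: stable under scaling by `λ ∈ [0,1]`. -/
def IsStarShapedSet {Ω : Type*} [TopologicalSpace Ω] (S : Set (Ω →ᵇ ℝ)) : Prop :=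
  ∀ X ∈ S, ∀ l ∈ Set.Icc (0 : ℝ) 1, l • X ∈ S

/-- An acceptance set: the supremum of the accepted constants is `0`,
and it is downward closed in the pointwise order. -/
def IsAcceptanceSet {Ω : Type*} [TopologicalSpace Ω] (A : Set (Ω →ᵇ ℝ)) : Prop :=
  IsLUB {m : ℝ | const Ω m ∈ A} 0 ∧
  ∀ X ∈ A, ∀ Y : Ω →ᵇ ℝ, Y ≤ X → Y ∈ A

-- auxiliary lemmas

lemma aux_smul_sub_const {Ω : Type*} [TopologicalSpace Ω] (l m : ℝ) (hl : l ≠ 0)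
    (X : Ω →ᵇ ℝ) : (1 / l) • (l • X - const Ω m) = X - const Ω (m / l) := by
  ext ω
  simp only [BoundedContinuousFunction.coe_smul, BoundedContinuousFunction.coe_sub,
    Pi.smul_apply, Pi.sub_apply, BoundedContinuousFunction.const_apply, smul_eq_mul]
  field_simp

lemma aux_const_eq {Ω : Type*} [TopologicalSpace Ω] (m : ℝ) :
    (0 : Ω →ᵇ ℝ) - const Ω (-m) = const Ω m := by
  ext ω; simp

lemma aux_rho_const {Ω : Type*} [TopologicalSpace Ω] (ρ : (Ω →ᵇ ℝ) → ℝ)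
    (hρ : IsRiskMeasure ρ) (m : ℝ) : ρ (const Ω m) = m := by
  have := hρ.2.1 0 (-m)
  rw [aux_const_eq, hρ.2.2] at this
  linarith

lemma aux_star_iff_set {Ω : Type*} [TopologicalSpace Ω]
    (ρ : (Ω →ᵇ ℝ) → ℝ) (hρ : IsRiskMeasure ρ) :
    IsStarShaped ρ ↔ IsStarShapedSet {X : Ω →ᵇ ℝ | ρ X ≤ 0} := by
  constructor
  · intro hs X hX l hl
    rcases eq_or_lt_of_le hl.1 with h0 | h0
    · simp only [Set.mem_setOf_eq, ← h0, zero_smul, hρ.2.2, le_refl]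
    rcases eq_or_lt_of_le hl.2 with h1 | h1
    · simpa [h1] using hX
    · have hinv : 1 < 1 / l := (one_lt_div h0).mpr h1
      have := hs (l • X) (1 / l) hinv
      rw [smul_smul, one_div_mul_cancel (ne_of_gt h0), one_smul] at this
      have h2 : (1 / l) * ρ (l • X) ≤ 0 := le_trans this hX
      have := (mul_nonpos_iff.mp h2)
      rcases this with ⟨h, h'⟩ | ⟨h, h'⟩
      · exact h'
      · nlinarith
  · intro hs X l hl
    set m := ρ (l • X) with hm
    have h1 : ρ (l • X - const Ω m) ≤ 0 := by rw [hρ.2.1]; linarith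
    have h2 := hs _ h1 (1 / l) ⟨by positivity, by
      rw [div_le_one (by linarith)]; linarith⟩
    rw [aux_smul_sub_const l m (by linarith) X] at h2
    simp only [Set.mem_setOf_eq] at h2
    rw [hρ.2.1] at h2
    have : ρ X ≤ m / l := by linarith
    calc l * ρ X ≤ l * (m / l) := by
          apply mul_le_mul_of_nonneg_left this (by linarith)
      _ = m := by field_simp

theorem star_shaped_acceptance_set_characterization
    {Ω : Type*} [TopologicalSpace Ω] [DiscreteTopology Ω] [Nonempty Ω]
    (ρ : (Ω →ᵇ ℝ) → ℝ) (hρ : IsRiskMeasure ρ) :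
    (IsStarShaped ρ ↔ IsStarShapedSet {X : Ω →ᵇ ℝ | ρ X ≤ 0}) ∧
    (IsStarShaped ρ ↔
      ∃ A : Set (Ω →ᵇ ℝ), IsAcceptanceSet A ∧ IsStarShapedSet A ∧
        ∀ X : Ω →ᵇ ℝ, ρ X = sInf {m : ℝ | X - const Ω m ∈ A}) := by
  refine ⟨aux_star_iff_set ρ hρ, ?_, ?_⟩
  · -- (i) ⇒ (iii)
    intro hs
    refine ⟨{X : Ω →ᵇ ℝ | ρ X ≤ 0}, ⟨?_, ?_⟩, (aux_star_iff_set ρ hρ).mp hs, ?_⟩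
    · have : {m : ℝ | const Ω m ∈ {X : Ω →ᵇ ℝ | ρ X ≤ 0}} = Set.Iic 0 := by
        ext m; simp [aux_rho_const ρ hρ]
      rw [this]; exact isLUB_Iic
    · intro X hX Y hY
      exact le_trans (hρ.1 X Y hY) hX
    · intro X
      have h1 : {m : ℝ | X - const Ω m ∈ {X : Ω →ᵇ ℝ | ρ X ≤ 0}} = Set.Ici (ρ X) := by
        ext m
        simp only [Set.mem_setOf_eq, hρ.2.1, Set.mem_Ici]
        constructor <;> intro h <;> linarith
      rw [h1, csInf_Ici]
  · -- (iii) ⇒ (i)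
    rintro ⟨A, ⟨hlub, hdc⟩, hss, hrep⟩
    have hconst_le : ∀ m : ℝ, const Ω m ∈ A → m ≤ 0 := fun m hm => hlub.1 hm
    have hne0 : {m : ℝ | const Ω m ∈ A}.Nonempty := by
      by_contra h
      rw [Set.not_nonempty_iff_eq_empty] at h
      have := hlub.2 (by rw [h]; intro x hx; exact absurd hx (Set.notMem_empty x) :
        (-1 : ℝ) ∈ upperBounds {m : ℝ | const Ω m ∈ A})
      linarith
    obtain ⟨m₀, hm₀⟩ := hne0
    have hmemne : ∀ X : Ω →ᵇ ℝ, {m : ℝ | X - const Ω m ∈ A}.Nonempty := by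
      intro X
      refine ⟨‖X‖ - m₀, hdc _ hm₀ _ ?_⟩
      intro ω
      show X ω - (‖X‖ - m₀) ≤ m₀
      have := (abs_le.mp (X.norm_coe_le_norm ω)).2
      linarith
    have hbdd : ∀ X : Ω →ᵇ ℝ, BddBelow {m : ℝ | X - const Ω m ∈ A} := by
      intro X
      refine ⟨-‖X‖, fun m hm => ?_⟩
      have hmem : const Ω (-‖X‖ - m) ∈ A := by
        refine hdc _ hm _ ?_
        intro ω
        show -‖X‖ - m ≤ X ω - m
        have := (abs_le.mp (X.norm_coe_le_norm ω)).1
        linarith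
      have := hconst_le _ hmem
      linarith
    intro X l hl
    rw [hrep (l • X)]
    apply le_csInf (hmemne (l • X))
    intro m hm
    have h1 : (1 / l) • (l • X - const Ω m) ∈ A :=
      hss _ hm (1 / l) ⟨by positivity, by rw [div_le_one (by linarith)]; linarith⟩
    rw [aux_smul_sub_const l m (by linarith) X] at h1
    have h2 : ρ X ≤ m / l := by
      rw [hrep X]; exact csInf_le (hbdd X) h1
    calc l * ρ X ≤ l * (m / l) := mul_le_mul_of_nonneg_left h2 (by linarith)
      _ = m := by field_simp
end

section
/- For a subadditive risk measure ρ : 𝒳 → ℝ, the following are equivalent: (i) ρ is star-shaped; (ii) ρ is positively homogeneous; (iii) ρ is coherent (positively homogeneous and subadditive). -/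
open BoundedContinuousFunction

def IsPositivelyHomogeneous {Ω : Type*} [TopologicalSpace Ω] (ρ : (Ω →ᵇ ℝ) → ℝ) : Prop :=
  ∀ (X : Ω →ᵇ ℝ) (l : ℝ), 0 < l → ρ (l • X) = l * ρ X

def IsSubadditive {Ω : Type*} [TopologicalSpace Ω] (ρ : (Ω →ᵇ ℝ) → ℝ) : Prop :=
  ∀ X Y : Ω →ᵇ ℝ, ρ (X + Y) ≤ ρ X + ρ Y

theorem subadditive_star_shaped_iff_positively_homogeneous
    {Ω : Type*} [TopologicalSpace Ω] [DiscreteTopology Ω] [Nonempty Ω]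
    (ρ : (Ω →ᵇ ℝ) → ℝ) (hρ : IsRiskMeasure ρ) (hsub : IsSubadditive ρ) :
    (IsStarShaped ρ ↔ IsPositivelyHomogeneous ρ) ∧
    (IsStarShaped ρ ↔ (IsPositivelyHomogeneous ρ ∧ IsSubadditive ρ)) := by
  have key : IsStarShaped ρ → IsPositivelyHomogeneous ρ := by
    intro hstar
    -- ρ(μX) ≤ μ ρ X for μ ∈ (0,1)
    have hle : ∀ (X : Ω →ᵇ ℝ) (μ : ℝ), 0 < μ → μ < 1 → ρ (μ • X) ≤ μ * ρ X := by
      intro X μ hμ0 hμ1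
      have hl : 1 < μ⁻¹ := (one_lt_inv₀ hμ0).mpr hμ1
      have := hstar (μ • X) μ⁻¹ hl
      rw [smul_smul, inv_mul_cancel₀ hμ0.ne', one_smul] at this
      have h2 : ρ (μ • X) ≤ μ * ρ X := by
        have := mul_le_mul_of_nonneg_left this hμ0.le
        rwa [← mul_assoc, mul_inv_cancel₀ hμ0.ne', one_mul] at this
      exact h2
    -- equality for μ ∈ (0,1)
    have heq : ∀ (X : Ω →ᵇ ℝ) (μ : ℝ), 0 < μ → μ < 1 → ρ (μ • X) = μ * ρ X := by
      intro X μ hμ0 hμ1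
      refine le_antisymm (hle X μ hμ0 hμ1) ?_
      have hsplit : X = μ • X + (1 - μ) • X := by
        rw [← add_smul]; ring_nf; rw [one_smul]
      have h1 : ρ X ≤ ρ (μ • X) + ρ ((1 - μ) • X) := by
        calc ρ X = ρ (μ • X + (1 - μ) • X) := by rw [← hsplit]
          _ ≤ _ := hsub _ _
      have h2 : ρ ((1 - μ) • X) ≤ (1 - μ) * ρ X :=
        hle X (1 - μ) (by linarith) (by linarith)
      linarith
    intro X l hl
    rcases lt_trichotomy l 1 with h | h | h
    · exact heq X l hl h
    · subst h; simp
    · have h1 : (0:ℝ) < l⁻¹ := inv_pos.mpr hl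
      have h2 : l⁻¹ < 1 := inv_lt_one_of_one_lt₀ h
      have := heq (l • X) l⁻¹ h1 h2
      rw [smul_smul, inv_mul_cancel₀ hl.ne', one_smul] at this
      have : l * ρ X = l * (l⁻¹ * ρ (l • X)) := by rw [← this]
      rw [← mul_assoc, mul_inv_cancel₀ hl.ne', one_mul] at this
      exact this.symm
  have back : IsPositivelyHomogeneous ρ → IsStarShaped ρ := by
    intro hph X l hl
    rw [hph X l (by linarith)]
  exact ⟨⟨key, back⟩, ⟨fun h => ⟨key h, hsub⟩, fun h => back h.1⟩⟩
end

section
/- Let I be a nonempty index set and let {ρ_i}_{i∈I} be a collection of star-shaped risk measures on 𝒳. Then the pointwise infimum ρ_∧(X) = inf_{i∈I} ρ_i(X) is finite for every X ∈ 𝒳 and defines a star-shaped risk measure on 𝒳. -/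
open BoundedContinuousFunction

theorem infimum_of_star_shaped_risk_measures
    {Ω : Type*} [TopologicalSpace Ω] [DiscreteTopology Ω] [Nonempty Ω]
    {ι : Type*} [Nonempty ι] (ρ : ι → (Ω →ᵇ ℝ) → ℝ)
    (hrm : ∀ i, IsRiskMeasure (ρ i)) (hss : ∀ i, IsStarShaped (ρ i)) :
    (∀ X : Ω →ᵇ ℝ, BddBelow (Set.range fun i => ρ i X)) ∧
    IsRiskMeasure (fun X : Ω →ᵇ ℝ => ⨅ i, ρ i X) ∧
    IsStarShaped (fun X : Ω →ᵇ ℝ => ⨅ i, ρ i X) := by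
  -- each ρ i evaluates constants
  have hconst : ∀ i (c : ℝ), ρ i (const Ω c) = c := by
    intro i c
    have h := (hrm i).2.1 0 (-c)
    have h0 : (0 : Ω →ᵇ ℝ) - const Ω (-c) = const Ω c := by
      ext ω; simp
    rw [h0] at h
    simpa [(hrm i).2.2] using h
  have hlb : ∀ i (X : Ω →ᵇ ℝ), -‖X‖ ≤ ρ i X := by
    intro i X
    have hle : const Ω (-‖X‖) ≤ X := fun ω => by
      simpa using (abs_le.1 (X.norm_coe_le_norm ω)).1
    have := (hrm i).1 X (const Ω (-‖X‖)) hle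
    rwa [hconst] at this
  have hbdd : ∀ X : Ω →ᵇ ℝ, BddBelow (Set.range fun i => ρ i X) := by
    intro X
    exact ⟨-‖X‖, by rintro y ⟨i, rfl⟩; exact hlb i X⟩
  refine ⟨hbdd, ⟨?_, ?_, ?_⟩, ?_⟩
  · intro X Y hYX
    exact ciInf_mono (hbdd Y) fun i => (hrm i).1 X Y hYX
  · intro X m
    have : ∀ i, ρ i (X - const Ω m) = ρ i X - m := fun i => (hrm i).2.1 X m
    simp only [this]
    refine le_antisymm ?_ (le_ciInf fun i => sub_le_sub_right (ciInf_le (hbdd X) i) m)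
    have hb : BddBelow (Set.range fun i => ρ i X - m) := by
      obtain ⟨c, hc⟩ := hbdd X
      exact ⟨c - m, by rintro y ⟨i, rfl⟩; exact sub_le_sub_right (hc ⟨i, rfl⟩) m⟩
    refine le_sub_iff_add_le.mpr (le_ciInf fun i => ?_)
    have := ciInf_le hb i
    linarith
  · have : ∀ i, ρ i (0 : Ω →ᵇ ℝ) = 0 := fun i => (hrm i).2.2
    simp [this]
  · intro X l hl
    have hl0 : (0 : ℝ) ≤ l := by linarith
    refine le_ciInf fun i => ?_
    calc l * ⨅ j, ρ j X ≤ l * ρ i X :=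
          mul_le_mul_of_nonneg_left (ciInf_le (hbdd X) i) hl0
      _ ≤ ρ i (l • X) := hss i X l hl
end

section
/- A risk measure ρ : 𝒳 → ℝ is positively homogeneous if and only if there exists a collection Γ of coherent risk measures on 𝒳 such that ρ(X) = min_{γ∈Γ} γ(X) for every X ∈ 𝒳 (the minimum being attained for each X). Moreover, in this case Γ can be chosen as the collection of all coherent risk measures γ satisfying γ(Y) ≥ ρ(Y) for all Y ∈ 𝒳; that is, ρ is positively homogeneous if and only if for every X ∈ 𝒳 there exists a coherent risk measure γ with γ ≥ ρ pointwise and γ(X) = ρ(X). -/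
open BoundedContinuousFunction

def IsCoherent {Ω : Type*} [TopologicalSpace Ω] (ρ : (Ω →ᵇ ℝ) → ℝ) : Prop :=
  IsPositivelyHomogeneous ρ ∧ IsSubadditive ρ

lemma riskAux_exists_coherent {Ω : Type*} [TopologicalSpace Ω] [Nonempty Ω]
    (ρ : (Ω →ᵇ ℝ) → ℝ) (hρ : IsRiskMeasure ρ)
    (hPH : IsPositivelyHomogeneous ρ) (X : Ω →ᵇ ℝ) :
    ∃ γ : (Ω →ᵇ ℝ) → ℝ, IsRiskMeasure γ ∧ IsCoherent γ ∧
      (∀ Y, ρ Y ≤ γ Y) ∧ γ X = ρ X := by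
  obtain ⟨hmono, htr, hzero⟩ := hρ
  have htr' : ∀ (Z : Ω →ᵇ ℝ) (c : ℝ), ρ (Z + const Ω c) = ρ Z + c := by
    intro Z c
    have h1 : Z + const Ω c = Z - const Ω (-c) := by ext x; simp
    rw [h1, htr]; ring
  have key : ∀ (Y : Ω →ᵇ ℝ) (l c : ℝ), 0 ≤ l → Y ≤ l • X + const Ω c →
      ρ Y ≤ l * ρ X + c := by
    intro Y l c hl hY
    have h1 : ρ Y ≤ ρ (l • X + const Ω c) := hmono _ _ hY
    rcases hl.eq_or_lt with h | h
    · subst h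
      rw [zero_smul, zero_add] at h1
      have h2 : ρ (const Ω c) = c := by
        have := htr' 0 c; rwa [zero_add, hzero, zero_add] at this
      rw [h2] at h1; linarith
    · rw [htr' (l • X) c, hPH X l h] at h1; exact h1
  set S : (Ω →ᵇ ℝ) → Set ℝ :=
    fun Y => {r | ∃ l c : ℝ, 0 ≤ l ∧ Y ≤ l • X + const Ω c ∧ r = l * ρ X + c} with hS
  have hne : ∀ Y, (S Y).Nonempty := by
    intro Y
    refine ⟨0 * ρ X + ‖Y‖, 0, ‖Y‖, le_refl 0, fun x => ?_, rfl⟩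
    have h1 : Y x ≤ ‖Y‖ := (abs_le.mp (Y.norm_coe_le_norm x)).2
    show Y x ≤ ((0 : ℝ) • X + const Ω ‖Y‖) x
    simpa using h1
  have hbdd : ∀ Y, ρ Y ∈ lowerBounds (S Y) := by
    rintro Y r ⟨l, c, hl, hY, rfl⟩
    exact key Y l c hl hY
  have hbdd' : ∀ Y, BddBelow (S Y) := fun Y => ⟨ρ Y, hbdd Y⟩
  set γ : (Ω →ᵇ ℝ) → ℝ := fun Y => sInf (S Y) with hγ
  have csle : ∀ (Y : Ω →ᵇ ℝ) (r : ℝ), r ∈ S Y → γ Y ≤ r :=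
    fun Y r hr => csInf_le (hbdd' Y) hr
  have lecs : ∀ (Y : Ω →ᵇ ℝ) (b : ℝ), (∀ r ∈ S Y, b ≤ r) → b ≤ γ Y :=
    fun Y b h => le_csInf (hne Y) h
  have hdom : ∀ Y, ρ Y ≤ γ Y := fun Y => lecs Y _ (fun r hr => hbdd Y hr)
  have hγmono : ∀ Y₁ Y₂ : Ω →ᵇ ℝ, Y₂ ≤ Y₁ → γ Y₂ ≤ γ Y₁ := by
    intro Y₁ Y₂ h
    refine lecs Y₁ _ ?_
    rintro r ⟨l, c, hl, hY, rfl⟩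
    exact csle Y₂ _ ⟨l, c, hl, le_trans h hY, rfl⟩
  have hγtr : ∀ (Y : Ω →ᵇ ℝ) (m : ℝ), γ (Y - const Ω m) = γ Y - m := by
    intro Y m
    have mem1 : ∀ r ∈ S Y, r - m ∈ S (Y - const Ω m) := by
      rintro r ⟨l, c, hl, hY, rfl⟩
      refine ⟨l, c - m, hl, fun x => ?_, by ring⟩
      have h1 : Y x ≤ (l • X + const Ω c) x := hY x
      show (Y - const Ω m) x ≤ (l • X + const Ω (c - m)) x
      simp only [coe_sub, Pi.sub_apply, coe_add, Pi.add_apply, coe_smul, Pi.smul_apply,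
        const_apply, smul_eq_mul] at h1 ⊢
      linarith
    have mem2 : ∀ r ∈ S (Y - const Ω m), r + m ∈ S Y := by
      rintro r ⟨l, c, hl, hY, rfl⟩
      refine ⟨l, c + m, hl, fun x => ?_, by ring⟩
      have h1 : (Y - const Ω m) x ≤ (l • X + const Ω c) x := hY x
      show Y x ≤ (l • X + const Ω (c + m)) x
      simp only [coe_sub, Pi.sub_apply, coe_add, Pi.add_apply, coe_smul, Pi.smul_apply,
        const_apply, smul_eq_mul] at h1 ⊢
      linarith
    have h1 : γ (Y - const Ω m) ≤ γ Y - m := by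
      have : γ (Y - const Ω m) + m ≤ γ Y := by
        refine lecs Y _ fun r hr => ?_
        have := csle _ _ (mem1 r hr)
        linarith
      linarith
    have h2 : γ Y - m ≤ γ (Y - const Ω m) := by
      refine lecs _ _ fun r hr => ?_
      have := csle _ _ (mem2 r hr)
      linarith
    linarith
  have hγzero : γ 0 = 0 := by
    have h1 : γ 0 ≤ 0 := by
      refine csle _ _ ⟨0, 0, le_refl 0, fun x => ?_, by ring⟩
      show (0 : Ω →ᵇ ℝ) x ≤ (((0 : ℝ) • X + const Ω (0:ℝ) : Ω →ᵇ ℝ)) x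
      simp
    have h2 : (0 : ℝ) ≤ γ 0 := by
      have := hdom 0; rwa [hzero] at this
    linarith
  have hγPH : IsPositivelyHomogeneous γ := by
    intro Y l hl
    have mem1 : ∀ r ∈ S Y, l * r ∈ S (l • Y) := by
      rintro r ⟨a, c, ha, hY, rfl⟩
      refine ⟨l * a, l * c, by positivity, fun x => ?_, by ring⟩
      have h1 : Y x ≤ (a • X + const Ω c) x := hY x
      show (l • Y) x ≤ ((l * a) • X + const Ω (l * c)) x
      simp only [coe_add, Pi.add_apply, coe_smul, Pi.smul_apply, const_apply,
        smul_eq_mul] at h1 ⊢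
      nlinarith
    have mem2 : ∀ r ∈ S (l • Y), r / l ∈ S Y := by
      rintro r ⟨a, c, ha, hY, rfl⟩
      refine ⟨a / l, c / l, by positivity, fun x => ?_, by ring⟩
      have h1 : (l • Y) x ≤ (a • X + const Ω c) x := hY x
      show Y x ≤ ((a / l) • X + const Ω (c / l)) x
      simp only [coe_add, Pi.add_apply, coe_smul, Pi.smul_apply, const_apply,
        smul_eq_mul] at h1 ⊢
      rw [div_mul_eq_mul_div, ← add_div, le_div_iff₀ hl]
      nlinarith
    have h1 : γ (l • Y) ≤ l * γ Y := by
      have h : γ (l • Y) / l ≤ γ Y := by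
        refine lecs Y _ fun r hr => ?_
        have := csle _ _ (mem1 r hr)
        rw [div_le_iff₀ hl]; linarith
      calc γ (l • Y) = l * (γ (l • Y) / l) := by field_simp
      _ ≤ l * γ Y := by nlinarith
    have h2 : l * γ Y ≤ γ (l • Y) := by
      refine lecs _ _ fun r hr => ?_
      have h := csle _ _ (mem2 r hr)
      have heq : l * (r / l) = r := by field_simp
      nlinarith
    linarith
  have hγsub : IsSubadditive γ := by
    intro Y₁ Y₂
    have mem : ∀ r₁ ∈ S Y₁, ∀ r₂ ∈ S Y₂, r₁ + r₂ ∈ S (Y₁ + Y₂) := by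
      rintro r₁ ⟨a₁, c₁, ha₁, hY₁, rfl⟩ r₂ ⟨a₂, c₂, ha₂, hY₂, rfl⟩
      refine ⟨a₁ + a₂, c₁ + c₂, by linarith, fun x => ?_, by ring⟩
      have h1 : Y₁ x ≤ (a₁ • X + const Ω c₁) x := hY₁ x
      have h2 : Y₂ x ≤ (a₂ • X + const Ω c₂) x := hY₂ x
      show (Y₁ + Y₂) x ≤ ((a₁ + a₂) • X + const Ω (c₁ + c₂)) x
      simp only [coe_add, Pi.add_apply, coe_smul, Pi.smul_apply, const_apply,
        smul_eq_mul] at h1 h2 ⊢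
      nlinarith
    have h : γ (Y₁ + Y₂) - γ Y₁ ≤ γ Y₂ := by
      refine lecs _ _ fun r₂ hr₂ => ?_
      have h' : γ (Y₁ + Y₂) - r₂ ≤ γ Y₁ := by
        refine lecs _ _ fun r₁ hr₁ => ?_
        have := csle _ _ (mem r₁ hr₁ r₂ hr₂)
        linarith
      linarith
    linarith
  have hγX : γ X = ρ X := by
    have h1 : γ X ≤ ρ X := by
      refine csle _ _ ⟨1, 0, zero_le_one, fun x => ?_, by ring⟩
      show X x ≤ (((1 : ℝ) • X + const Ω (0:ℝ) : Ω →ᵇ ℝ)) x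
      simp
    linarith [hdom X]
  exact ⟨γ, ⟨hγmono, hγtr, hγzero⟩, ⟨hγPH, hγsub⟩, hdom, hγX⟩

theorem positively_homogeneous_iff_min_of_coherent
    {Ω : Type*} [TopologicalSpace Ω] [DiscreteTopology Ω] [Nonempty Ω]
    (ρ : (Ω →ᵇ ℝ) → ℝ) (hρ : IsRiskMeasure ρ) :
    (IsPositivelyHomogeneous ρ ↔
      ∃ Γ : Set ((Ω →ᵇ ℝ) → ℝ),
        (∀ γ ∈ Γ, IsRiskMeasure γ ∧ IsCoherent γ) ∧
        ∀ X : Ω →ᵇ ℝ, IsLeast {y : ℝ | ∃ γ ∈ Γ, y = γ X} (ρ X)) ∧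
    (IsPositivelyHomogeneous ρ ↔
      ∀ X : Ω →ᵇ ℝ, ∃ γ : (Ω →ᵇ ℝ) → ℝ,
        IsRiskMeasure γ ∧ IsCoherent γ ∧ (∀ Y : Ω →ᵇ ℝ, ρ Y ≤ γ Y) ∧ γ X = ρ X) := by
  constructor
  · constructor
    · intro hPH
      refine ⟨{γ | IsRiskMeasure γ ∧ IsCoherent γ ∧ ∀ Y, ρ Y ≤ γ Y},
        fun γ hγ => ⟨hγ.1, hγ.2.1⟩, fun X => ⟨?_, ?_⟩⟩
      · obtain ⟨γ, h1, h2, h3, h4⟩ := riskAux_exists_coherent ρ hρ hPH X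
        exact ⟨γ, ⟨h1, h2, h3⟩, h4.symm⟩
      · rintro y ⟨γ, ⟨_, _, hdom⟩, rfl⟩
        exact hdom X
    · rintro ⟨Γ, hΓ, hleast⟩ X l hl
      obtain ⟨⟨γ₁, hγ₁, hval₁⟩, hlb₁⟩ := hleast (l • X)
      obtain ⟨⟨γ₂, hγ₂, hval₂⟩, hlb₂⟩ := hleast X
      have h1 : ρ (l • X) ≤ l * ρ X := by
        rw [hval₂, ← (hΓ γ₂ hγ₂).2.1 X l hl]
        exact hlb₁ ⟨γ₂, hγ₂, rfl⟩
      have h2 : l * ρ X ≤ ρ (l • X) := by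
        have h3 : ρ X ≤ γ₁ X := hlb₂ ⟨γ₁, hγ₁, rfl⟩
        rw [hval₁, (hΓ γ₁ hγ₁).2.1 X l hl]
        nlinarith
      linarith
  · constructor
    · intro hPH X
      exact riskAux_exists_coherent ρ hρ hPH X
    · intro h X l hl
      obtain ⟨γ₁, _, hc₁, hdom₁, hval₁⟩ := h (l • X)
      obtain ⟨γ₂, _, hc₂, hdom₂, hval₂⟩ := h X
      have h1 : ρ (l • X) ≤ l * ρ X := by
        rw [← hval₂, ← hc₂.1 X l hl]
        exact hdom₂ (l • X)
      have h2 : l * ρ X ≤ ρ (l • X) := by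
        rw [← hval₁, hc₁.1 X l hl]
        nlinarith [hdom₁ X]
      linarith
end

section
/- A risk measure ρ : 𝒳 → ℝ is star-shaped if and only if there exists a family {𝒜_β}_{β∈B} of convex acceptance sets such that for every X ∈ 𝒳, ρ(X) = min{m ∈ ℝ : X − m ∈ 𝒜_β for some β ∈ B} (the minimum being attained). Similarly, ρ is positively homogeneous if and only if such a family can be chosen with each 𝒜_β a coherent acceptance set (a convex cone acceptance set). -/
open BoundedContinuousFunction

/-- A coherent acceptance set is a convex cone. -/
def IsCone {Ω : Type*} [TopologicalSpace Ω] (A : Set (Ω →ᵇ ℝ)) : Prop :=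
  ∀ X ∈ A, ∀ c : ℝ, 0 ≤ c → c • X ∈ A

/-!
Both properties say that `ρ (t • X) ≤ t * ρ X` for all `t` in `T = [0, 1]`, resp. `T = [0, ∞)`.
Then `ρ (Z - ρ Z) = 0` gives `ρ ≤ 0` on the lower closure of
`{t • (Z - ρ Z) | t ∈ T}`; these sets are convex (cones when `T = [0, ∞)`) acceptance sets, and
the one for `Z = X` attains the value `ρ X`. Conversely, if `X - ρ X ∈ A` for a convex
acceptance set `A`, then mixing `X - ρ X` with acceptable constants `m` gives
`ρ (t • X) ≤ t * ρ X - (1 - t) * m`, and letting `m ↑ 0` yields the inequality on `[0, 1]`;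
for a cone, `t • (X - ρ X) ∈ A` yields it on `[0, ∞)` directly.
-/

open Set

instance {α : Type*} [TopologicalSpace α] : PosSMulMono ℝ (α →ᵇ ℝ) :=
  ⟨fun _ hc _ _ h x => mul_le_mul_of_nonneg_left (h x) hc⟩

theorem Convex.lowerClosure {𝕜 E : Type*} [Semiring 𝕜] [PartialOrder 𝕜] [AddCommMonoid E]
    [PartialOrder E] [IsOrderedAddMonoid E] [Module 𝕜 E] [PosSMulMono 𝕜 E] {s : Set E}
    (hs : Convex 𝕜 s) : Convex 𝕜 (lowerClosure s : Set E) := by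
  rintro x ⟨a, ha, hxa⟩ y ⟨b, hb, hyb⟩ α β hα hβ hαβ
  exact ⟨α • a + β • b, hs ha hb hα hβ hαβ,
    add_le_add (smul_le_smul_of_nonneg_left hxa hα) (smul_le_smul_of_nonneg_left hyb hβ)⟩

section RiskMeasure

variable {Ω : Type*} [TopologicalSpace Ω] {ρ : (Ω →ᵇ ℝ) → ℝ}

theorem isStarShaped_iff_map_smul_le (h0 : ρ 0 = 0) :
    IsStarShaped ρ ↔ ∀ t ∈ Icc (0 : ℝ) 1, ∀ X, ρ (t • X) ≤ t * ρ X := by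
  constructor
  · rintro hs t ⟨ht0, ht1⟩ X
    rcases ht0.eq_or_lt with rfl | ht0
    · simp [h0]
    rcases ht1.eq_or_lt with rfl | ht1
    · simp
    have := hs (t • X) t⁻¹ (one_lt_inv₀ ht0 |>.2 ht1)
    rwa [inv_smul_smul₀ ht0.ne', inv_mul_le_iff₀ ht0] at this
  · intro h X l hl
    have hl0 : 0 < l := zero_lt_one.trans hl
    have := h l⁻¹ ⟨inv_nonneg.2 hl0.le, inv_le_one_of_one_le₀ hl.le⟩ (l • X)
    rwa [inv_smul_smul₀ hl0.ne', le_inv_mul_iff₀ hl0] at this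

theorem isPositivelyHomogeneous_iff_map_smul_le (h0 : ρ 0 = 0) :
    IsPositivelyHomogeneous ρ ↔ ∀ t ∈ Ici (0 : ℝ), ∀ X, ρ (t • X) ≤ t * ρ X := by
  constructor
  · intro hph t ht X
    rcases (mem_Ici.1 ht).eq_or_lt with rfl | ht
    · simp [h0]
    exact (hph X t ht).le
  · intro h X l hl
    refine le_antisymm (h l hl.le X) ?_
    have := h l⁻¹ (inv_nonneg.2 hl.le) (l • X)
    rwa [inv_smul_smul₀ hl.ne', le_inv_mul_iff₀ hl] at this

namespace IsRiskMeasure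

variable (hρ : IsRiskMeasure ρ)
include hρ

theorem mono {X Y : Ω →ᵇ ℝ} (h : Y ≤ X) : ρ Y ≤ ρ X := hρ.1 X Y h

theorem map_sub_const (X : Ω →ᵇ ℝ) (m : ℝ) : ρ (X - const Ω m) = ρ X - m := hρ.2.1 X m

theorem map_zero : ρ 0 = 0 := hρ.2.2

theorem map_const (m : ℝ) : ρ (const Ω m) = m := by
  have hm : (0 : Ω →ᵇ ℝ) - const Ω (-m) = const Ω m := by ext; simp
  have := hρ.map_sub_const 0 (-m)
  rw [hm, hρ.map_zero] at this
  linarith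

theorem isAcceptanceSet_of_nonpos {A : Set (Ω →ᵇ ℝ)} (hA : IsLowerSet A) (h0 : 0 ∈ A)
    (hle : ∀ X ∈ A, ρ X ≤ 0) : IsAcceptanceSet A :=
  ⟨⟨fun m hm => hρ.map_const m ▸ hle _ hm, fun _ hb => hb h0⟩, fun _ hX _ hYX => hA hYX hX⟩

theorem isLeast_of_nonpos {𝒞 : Set (Set (Ω →ᵇ ℝ))} (hle : ∀ A ∈ 𝒞, ∀ X ∈ A, ρ X ≤ 0)
    (hmem : ∀ X, ∃ A ∈ 𝒞, X - const Ω (ρ X) ∈ A) (X : Ω →ᵇ ℝ) :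
    IsLeast {m | ∃ A ∈ 𝒞, X - const Ω m ∈ A} (ρ X) := by
  refine ⟨hmem X, fun m ⟨A, hA, hXA⟩ => ?_⟩
  have := hle A hA _ hXA
  rw [hρ.map_sub_const] at this
  linarith

end IsRiskMeasure

variable (ρ) in
def acceptanceFamily (T : Set ℝ) : Set (Set (Ω →ᵇ ℝ)) :=
  range fun Z => (lowerClosure ((· • (Z - const Ω (ρ Z))) '' T) : Set (Ω →ᵇ ℝ))

variable {T : Set ℝ}

theorem convex_of_mem_acceptanceFamily (hT : Convex ℝ T) {A : Set (Ω →ᵇ ℝ)}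
    (hA : A ∈ acceptanceFamily ρ T) : Convex ℝ A := by
  obtain ⟨Z, rfl⟩ := hA
  exact (hT.linear_image (LinearMap.toSpanSingleton ℝ _ _)).lowerClosure

theorem isCone_of_mem_acceptanceFamily_Ici {A : Set (Ω →ᵇ ℝ)}
    (hA : A ∈ acceptanceFamily ρ (Ici 0)) : IsCone A := by
  obtain ⟨Z, rfl⟩ := hA
  rintro X ⟨_, ⟨t, ht, rfl⟩, hX⟩ c hc
  exact ⟨(c * t) • _, ⟨c * t, mul_nonneg hc ht, rfl⟩,
    mul_smul c t (Z - const Ω (ρ Z)) ▸ smul_le_smul_of_nonneg_left hX hc⟩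

namespace IsRiskMeasure

variable (hρ : IsRiskMeasure ρ) (hT : ∀ t ∈ T, ∀ X, ρ (t • X) ≤ t * ρ X)
include hρ hT

theorem nonpos_of_mem_acceptanceFamily {A : Set (Ω →ᵇ ℝ)} (hA : A ∈ acceptanceFamily ρ T)
    {X : Ω →ᵇ ℝ} (hX : X ∈ A) : ρ X ≤ 0 := by
  obtain ⟨Z, rfl⟩ := hA
  obtain ⟨_, ⟨t, ht, rfl⟩, hXt⟩ := hX
  calc ρ X ≤ ρ (t • (Z - const Ω (ρ Z))) := hρ.mono hXt
    _ ≤ t * ρ (Z - const Ω (ρ Z)) := hT t ht _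
    _ = 0 := by rw [hρ.map_sub_const, sub_self, mul_zero]

theorem isAcceptanceSet_of_mem_acceptanceFamily (h0 : 0 ∈ T) {A : Set (Ω →ᵇ ℝ)}
    (hA : A ∈ acceptanceFamily ρ T) : IsAcceptanceSet A := by
  obtain ⟨Z, rfl⟩ := hA
  exact hρ.isAcceptanceSet_of_nonpos (lowerClosure _).lower
    (subset_lowerClosure ⟨0, h0, zero_smul ℝ _⟩)
    fun _ => hρ.nonpos_of_mem_acceptanceFamily hT ⟨Z, rfl⟩

theorem isLeast_acceptanceFamily (h1 : 1 ∈ T) (X : Ω →ᵇ ℝ) :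
    IsLeast {m | ∃ A ∈ acceptanceFamily ρ T, X - const Ω m ∈ A} (ρ X) :=
  hρ.isLeast_of_nonpos (fun _ hA _ => hρ.nonpos_of_mem_acceptanceFamily hT hA)
    (fun Z => ⟨_, ⟨Z, rfl⟩, subset_lowerClosure ⟨1, h1, one_smul ℝ _⟩⟩) X

end IsRiskMeasure

theorem map_smul_le_of_isLeast_of_convex {𝒞 : Set (Set (Ω →ᵇ ℝ))}
    (h𝒞 : ∀ A ∈ 𝒞, IsAcceptanceSet A ∧ Convex ℝ A)
    (hrep : ∀ X, IsLeast {m | ∃ A ∈ 𝒞, X - const Ω m ∈ A} (ρ X)) :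
    ∀ t ∈ Icc (0 : ℝ) 1, ∀ X, ρ (t • X) ≤ t * ρ X := by
  rintro t ⟨ht0, ht1⟩ X
  rcases ht1.eq_or_lt with rfl | ht1
  · simp
  have ht1' : 0 < 1 - t := sub_pos.2 ht1
  obtain ⟨A, hA, hXA⟩ := (hrep X).1
  obtain ⟨⟨hsup, -⟩, hconv⟩ := h𝒞 A hA
  have hbound : (t * ρ X - ρ (t • X)) / (1 - t) ∈ upperBounds {m | const Ω m ∈ A} := by
    intro m hm
    have hmix := hconv hXA hm ht0 ht1'.le (add_sub_cancel t 1)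
    have hmix_eq : t • (X - const Ω (ρ X)) + (1 - t) • const Ω m =
        t • X - const Ω (t * ρ X - (1 - t) * m) := by
      ext
      simp only [coe_add, coe_smul, coe_sub, const_apply, Pi.sub_apply, smul_eq_mul, Pi.add_apply]
      ring
    rw [hmix_eq] at hmix
    have := (hrep (t • X)).2 ⟨A, hA, hmix⟩
    rw [le_div_iff₀ ht1']
    linarith
  have := hsup.2 hbound
  rw [le_div_iff₀ ht1', zero_mul] at this
  linarith

theorem map_smul_le_of_isLeast_of_isCone {𝒞 : Set (Set (Ω →ᵇ ℝ))} (h𝒞 : ∀ A ∈ 𝒞, IsCone A)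
    (hrep : ∀ X, IsLeast {m | ∃ A ∈ 𝒞, X - const Ω m ∈ A} (ρ X)) :
    ∀ t ∈ Ici (0 : ℝ), ∀ X, ρ (t • X) ≤ t * ρ X := by
  intro t ht X
  obtain ⟨A, hA, hXA⟩ := (hrep X).1
  refine (hrep (t • X)).2 ⟨A, hA, ?_⟩
  convert h𝒞 A hA _ hXA t ht using 1
  ext; simp [mul_sub]

end RiskMeasure

theorem star_shaped_iff_union_of_convex_acceptance_sets_general
    {Ω : Type*} [TopologicalSpace Ω]
    (ρ : (Ω →ᵇ ℝ) → ℝ) (hρ : IsRiskMeasure ρ) :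
    (IsStarShaped ρ ↔
      ∃ 𝒞 : Set (Set (Ω →ᵇ ℝ)),
        (∀ A ∈ 𝒞, IsAcceptanceSet A ∧ Convex ℝ A) ∧
        ∀ X : Ω →ᵇ ℝ,
          IsLeast {m : ℝ | ∃ A ∈ 𝒞, X - const Ω m ∈ A} (ρ X)) ∧
    (IsPositivelyHomogeneous ρ ↔
      ∃ 𝒞 : Set (Set (Ω →ᵇ ℝ)),
        (∀ A ∈ 𝒞, IsAcceptanceSet A ∧ Convex ℝ A ∧ IsCone A) ∧
        ∀ X : Ω →ᵇ ℝ,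
          IsLeast {m : ℝ | ∃ A ∈ 𝒞, X - const Ω m ∈ A} (ρ X)) := by
  refine ⟨(isStarShaped_iff_map_smul_le hρ.map_zero).trans ⟨fun hT => ?_, ?_⟩,
    (isPositivelyHomogeneous_iff_map_smul_le hρ.map_zero).trans ⟨fun hT => ?_, ?_⟩⟩
  · exact ⟨acceptanceFamily ρ (Icc 0 1),
      fun A hA => ⟨hρ.isAcceptanceSet_of_mem_acceptanceFamily hT ⟨le_rfl, zero_le_one⟩ hA,
        convex_of_mem_acceptanceFamily (convex_Icc 0 1) hA⟩,
      hρ.isLeast_acceptanceFamily hT ⟨zero_le_one, le_rfl⟩⟩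
  · rintro ⟨𝒞, h𝒞, hrep⟩
    exact map_smul_le_of_isLeast_of_convex h𝒞 hrep
  · exact ⟨acceptanceFamily ρ (Ici 0),
      fun A hA => ⟨hρ.isAcceptanceSet_of_mem_acceptanceFamily hT self_mem_Ici hA,
        convex_of_mem_acceptanceFamily (convex_Ici 0) hA, isCone_of_mem_acceptanceFamily_Ici hA⟩,
      hρ.isLeast_acceptanceFamily hT (mem_Ici.2 zero_le_one)⟩
  · rintro ⟨𝒞, h𝒞, hrep⟩
    exact map_smul_le_of_isLeast_of_isCone (fun A hA => (h𝒞 A hA).2.2) hrep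

theorem star_shaped_iff_union_of_convex_acceptance_sets
    {Ω : Type*} [TopologicalSpace Ω] [DiscreteTopology Ω] [Nonempty Ω]
    (ρ : (Ω →ᵇ ℝ) → ℝ) (hρ : IsRiskMeasure ρ) :
    (IsStarShaped ρ ↔
      ∃ 𝒞 : Set (Set (Ω →ᵇ ℝ)),
        (∀ A ∈ 𝒞, IsAcceptanceSet A ∧ Convex ℝ A) ∧
        ∀ X : Ω →ᵇ ℝ,
          IsLeast {m : ℝ | ∃ A ∈ 𝒞, X - const Ω m ∈ A} (ρ X)) ∧
    (IsPositivelyHomogeneous ρ ↔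
      ∃ 𝒞 : Set (Set (Ω →ᵇ ℝ)),
        (∀ A ∈ 𝒞, IsAcceptanceSet A ∧ Convex ℝ A ∧ IsCone A) ∧
        ∀ X : Ω →ᵇ ℝ,
          IsLeast {m : ℝ | ∃ A ∈ 𝒞, X - const Ω m ∈ A} (ρ X)) :=
  star_shaped_iff_union_of_convex_acceptance_sets_general ρ hρ
end
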